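/- Let T > 0 and N ≥ 1 an integer, and let g : ℝ → ℂ be a continuous NT-periodic function with absolutely summable NT-Fourier coefficients. Then for every x ∈ ℝ, g(x) = (1/(NT)) · ∑_{ξ ∈ Ω_N} e^{iξx} · B_T(g)(ξ,x). -/

import Mathlib

open Real Finset

/-- The index set `J_N = {j ∈ ℤ : -N/2 ≤ j < N/2}` of Bloch frequencies. -/
noncomputable def JN (N : ℕ) : Finset ℤ := Finset.Ico ⌈-(N : ℝ) / 2⌉ ⌈(N : ℝ) / 2⌉

/-- Fourier transform on the torus of period `P`: `ĥ(ζ) = ∫_0^P e^{-iζy} h(y) dy`. -/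
noncomputable def fhat (P : ℝ) (h : ℝ → ℂ) (ζ : ℝ) : ℂ :=
  ∫ y in (0:ℝ)..P, Complex.exp (-(Complex.I * (ζ : ℂ) * (y : ℂ))) * h y

/-- The `T`-periodic Bloch transform of a `P`-periodic function `g`:
`B_T(g)(ξ,x) = ∑_{ℓ ∈ ℤ} e^{2πiℓx/T} ĝ(ξ + 2πℓ/T)`. -/
noncomputable def blochT (T P : ℝ) (g : ℝ → ℂ) (ξ x : ℝ) : ℂ :=
  ∑' ℓ : ℤ, Complex.exp (2 * (Real.pi : ℂ) * Complex.I * (ℓ : ℂ) * (x : ℂ) / (T : ℂ)) *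
    fhat P g (ξ + 2 * Real.pi * (ℓ : ℝ) / T)

/-!
Fourier inversion for the `NT`-periodic `g` gives `NT · g(x) = ∑_{k ∈ ℤ} e^{iξ_k x} ĝ(ξ_k)` with
`ξ_k = 2πk/(NT)`. Writing `k = j + Nℓ` uniquely with `j ∈ J_N` and `ℓ ∈ ℤ`, we have
`ξ_{j+Nℓ} = ξ_j + 2πℓ/T`, so the sum over `ℓ` for fixed `j` is `e^{iξ_j x} B_T(g)(ξ_j, x)`.
-/

section ToIcoMod

variable {α : Type*} [AddCommGroup α] [LinearOrder α] [IsOrderedAddMonoid α] [Archimedean α]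
  {p : α}

noncomputable def icoProdIntEquiv (hp : 0 < p) (a : α) : Set.Ico a (a + p) × ℤ ≃ α where
  toFun x := x.1 + x.2 • p
  invFun b := (⟨toIcoMod hp a b, toIcoMod_mem_Ico hp a b⟩, toIcoDiv hp a b)
  left_inv := fun ⟨⟨r, hr⟩, m⟩ => by
    have hdiv : toIcoDiv hp a r = 0 := toIcoDiv_eq_of_sub_zsmul_mem_Ico hp (by simpa using hr)
    ext
    · simpa [toIcoMod_add_zsmul] using (toIcoMod_eq_self hp).2 hr
    · simp [toIcoDiv_add_zsmul, hdiv]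
  right_inv b := toIcoMod_add_toIcoDiv_zsmul hp a b

theorem Summable.tsum_eq_tsum_Ico_tsum {E : Type*} [NormedAddCommGroup E] [CompleteSpace E]
    (hp : 0 < p) (a : α) {f : α → E} (hf : Summable f) :
    ∑' b, f b = ∑' r : Set.Ico a (a + p), ∑' m : ℤ, f (r + m • p) := by
  have hfe : Summable (f ∘ icoProdIntEquiv hp a) := (Equiv.summable_iff _).2 hf
  exact ((icoProdIntEquiv hp a).tsum_eq f).symm.trans (hfe.tsum_prod' fun r => hfe.prod_factor r)

end ToIcoMod

section Fourier

variable {P : ℝ}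

theorem fourier_coe_apply_eq_exp (k : ℤ) (x : ℝ) :
    (fourier k (x : AddCircle P) : ℂ) =
      Complex.exp (Complex.I * ((2 * π * k / P : ℝ) : ℂ) * x) := by
  rw [fourier_coe_apply]
  push_cast
  ring_nf

theorem Function.Periodic.fourierCoeff_lift [Fact (0 < P)] {g : ℝ → ℂ}
    (hgp : Function.Periodic g P) (k : ℤ) :
    fourierCoeff hgp.lift k = (P : ℂ)⁻¹ * fhat P g (2 * π * k / P) := by
  rw [fourierCoeff_eq_intervalIntegral _ k 0, zero_add, fhat, Complex.real_smul, one_div,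
    Complex.ofReal_inv]
  congr 1
  refine intervalIntegral.integral_congr fun y _ => ?_
  simp only [smul_eq_mul, hgp.lift_coe, fourier_coe_apply_eq_exp, Int.cast_neg, mul_neg, neg_div,
    Complex.ofReal_neg, neg_mul]

theorem hasSum_exp_mul_fhat (hP : 0 < P) {g : ℝ → ℂ} (hgc : Continuous g)
    (hgp : Function.Periodic g P) (hs : Summable fun k : ℤ => fhat P g (2 * π * k / P)) (x : ℝ) :
    HasSum (fun k : ℤ => Complex.exp (Complex.I * ((2 * π * k / P : ℝ) : ℂ) * x) *
      fhat P g (2 * π * k / P)) (P * g x) := by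
  have : Fact (0 < P) := ⟨hP⟩
  let G : C(AddCircle P, ℂ) := ⟨hgp.lift, hgc.quotient_liftOn' _⟩
  have hcoeff : fourierCoeff G = fun k : ℤ => (P : ℂ)⁻¹ * fhat P g (2 * π * k / P) :=
    funext hgp.fourierCoeff_lift
  have hG := has_pointwise_sum_fourier_series_of_summable (hcoeff ▸ hs.mul_left _) (x : AddCircle P)
  have hGx : G x = g x := hgp.lift_coe x
  have hterm : (fun k : ℤ => fourierCoeff G k • fourier k (x : AddCircle P)) = fun k : ℤ =>
      (P : ℂ)⁻¹ * (Complex.exp (Complex.I * ((2 * π * k / P : ℝ) : ℂ) * x) *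
        fhat P g (2 * π * k / P)) := by
    funext k
    rw [hcoeff, smul_eq_mul, fourier_coe_apply_eq_exp]
    ring
  rw [hterm, hGx] at hG
  have hP' : (P : ℂ) ≠ 0 := Complex.ofReal_ne_zero.2 hP.ne'
  rwa [← hasSum_mul_left_iff (inv_ne_zero hP'), inv_mul_cancel_left₀ hP']

end Fourier

theorem exp_mul_blochT (T P : ℝ) (g : ℝ → ℂ) (ξ x : ℝ) :
    Complex.exp (Complex.I * (ξ : ℂ) * x) * blochT T P g ξ x =
      ∑' ℓ : ℤ, Complex.exp (Complex.I * ((ξ + 2 * π * ℓ / T : ℝ) : ℂ) * x) *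
        fhat P g (ξ + 2 * π * ℓ / T) := by
  rw [blochT, ← tsum_mul_left]
  refine tsum_congr fun ℓ => ?_
  rw [← mul_assoc, ← Complex.exp_add]
  push_cast
  ring_nf

theorem JN_eq_Ico (N : ℕ) : JN N = Finset.Ico ⌈-(N : ℝ) / 2⌉ (⌈-(N : ℝ) / 2⌉ + N) := by
  rw [JN, ← Int.ceil_add_intCast]
  push_cast
  ring_nf

/-- The inverse Bloch representation formula (e:inv_b_rep) of Section 2.2:
`g(x) = (1/(NT)) ∑_{ξ ∈ Ω_N} e^{iξx} B_T(g)(ξ,x)` for `NT`-periodic `g`. -/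
theorem inverse_bloch_representation (T : ℝ) (hT : 0 < T) (N : ℕ) (hN : 1 ≤ N) (g : ℝ → ℂ)
    (hgc : Continuous g) (hgp : Function.Periodic g (N * T))
    (hgs : Summable fun k : ℤ => ‖fhat (N * T) g (2 * π * (k : ℝ) / (N * T))‖) :
    ∀ x : ℝ,
      g x = (1 / ((N : ℂ) * (T : ℂ))) *
        ∑ j ∈ JN N,
          Complex.exp (Complex.I * ((2 * π * (j : ℝ) / (N * T) : ℝ) : ℂ) * (x : ℂ)) *
            blochT T (N * T) g (2 * π * (j : ℝ) / (N * T)) x := by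
  intro x
  have hN₀ : (0 : ℤ) < N := by exact_mod_cast hN
  have hNT : (0 : ℝ) < N * T := mul_pos (by exact_mod_cast hN) hT
  have hNT' : (N : ℂ) * T ≠ 0 := by exact_mod_cast hNT.ne'
  have hfreq (j ℓ : ℤ) :
      2 * π * j / (N * T) + 2 * π * ℓ / T = 2 * π * ((j + ℓ • (N : ℤ) : ℤ) : ℝ) / (N * T) := by
    rw [smul_eq_mul]
    push_cast
    field_simp
  have hsum := hasSum_exp_mul_fhat hNT hgc hgp hgs.of_norm x
  set F : ℤ → ℂ := fun k => Complex.exp (Complex.I * ((2 * π * k / (N * T) : ℝ) : ℂ) * x) *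
    fhat (N * T) g (2 * π * k / (N * T))
  calc g x
      = 1 / ((N : ℂ) * T) * ((N * T : ℝ) * g x) := by
        push_cast
        rw [← mul_assoc, one_div_mul_cancel hNT', one_mul]
    _ = _ := by
      rw [← hsum.tsum_eq, hsum.summable.tsum_eq_tsum_Ico_tsum hN₀ ⌈-(N : ℝ) / 2⌉,
        ← Finset.coe_Ico, ← JN_eq_Ico,
        Finset.tsum_subtype' (JN N) fun j : ℤ => ∑' m : ℤ, F (j + m • (N : ℤ))]
      simp_rw [exp_mul_blochT, hfreq]
      rfl
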